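/- arXiv:1301.0810 — 2 statements merged into one kernel-verified Lean document; each statement's English description precedes it below -/
import Mathlib

section
/- Let X be a finite-dimensional real normed space and let f : X → ℝ ∪ {±∞} be a proper lower semicontinuous function. Then f is 1-coercive, i.e. lim_{‖x‖→∞} f(x)/‖x‖ = +∞, if and only if the recession function f_∞ equals the indicator function of {0}, equivalently the recession cone of the epigraph of f equals {0} × ℝ₊. -/
/-!
If `f` is 1-coercive, a recession direction `(u, α)` of `epi f` has `u = 0`: along
`tₙ • (xₙ, λₙ) → (u, α)` with `u ≠ 0` one has `‖xₙ‖ → ∞`, so `λₙ ≥ M ‖xₙ‖` eventually and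
`α ≥ M ‖u‖` for every `M`. Moreover `f` is bounded below (lsc on a compact ball, coercive
outside it), which forces `α ≥ 0`, and a single point of `dom f` gives all of `{0} × ℝ₊`.
Conversely, if `f xₙ < M ‖xₙ‖` along a sequence with `‖xₙ‖ → ∞`, a limit point `u` of
`xₙ / ‖xₙ‖` on the compact unit sphere gives the recession direction `(u, M)` with `u ≠ 0`.
-/

open Set Filter Topology Pointwise

variable {X : Type*} [NormedAddCommGroup X] [NormedSpace ℝ X]

def recessionCone {Y : Type*} [NormedAddCommGroup Y] [NormedSpace ℝ Y] (S : Set Y) : Set Y :=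
  {u | ∃ t : ℕ → ℝ, (∀ n, 0 < t n) ∧ Tendsto t atTop (𝓝 0) ∧
       ∃ a : ℕ → Y, (∀ n, a n ∈ S) ∧ Tendsto (fun n => t n • a n) atTop (𝓝 u)}

def epiSet (f : X → EReal) : Set (X × ℝ) := {p | f p.1 ≤ (p.2 : EReal)}

/-- The infimum is taken in `EReal`, so an empty fibre of `(epi f)_∞` over `u` gives `⊤`. -/
noncomputable def recFn (f : X → EReal) (u : X) : EReal :=
  sInf ((fun α : ℝ => (α : EReal)) '' {α : ℝ | (u, α) ∈ recessionCone (epiSet f)})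

/-- `f x / ‖x‖ → +∞` as `‖x‖ → ∞`, stated without dividing. -/
def OneCoercive (f : X → EReal) : Prop :=
  ∀ M : ℝ, ∃ R : ℝ, ∀ x : X, R ≤ ‖x‖ → ((M * ‖x‖ : ℝ) : EReal) ≤ f x

section RecessionCone

variable {Y Z : Type*} [NormedAddCommGroup Y] [NormedSpace ℝ Y]
  [NormedAddCommGroup Z] [NormedSpace ℝ Z]

theorem mem_recessionCone_of_forall_add_smul_mem {S : Set Y} {s v : Y}
    (hS : ∀ c : ℝ, 0 ≤ c → s + c • v ∈ S) : v ∈ recessionCone S := by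
  refine ⟨fun n => 1 / ((n : ℝ) + 1), fun n => by positivity,
    tendsto_one_div_add_atTop_nhds_zero_nat, fun n => s + ((n : ℝ) + 1) • v,
    fun n => hS _ (by positivity), ?_⟩
  have hlim : Tendsto (fun n : ℕ => (1 / ((n : ℝ) + 1)) • s + v) atTop (𝓝 ((0 : ℝ) • s + v)) :=
    (tendsto_one_div_add_atTop_nhds_zero_nat.smul_const s).add_const v
  rw [zero_smul, zero_add] at hlim
  refine hlim.congr fun n => ?_
  dsimp only
  rw [smul_add, smul_smul, one_div_mul_cancel (by positivity), one_smul]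

theorem mem_recessionCone_prod_iff {S : Set (Y × Z)} {u : Y} {α : Z} :
    (u, α) ∈ recessionCone S ↔ ∃ t : ℕ → ℝ, (∀ n, 0 < t n) ∧ Tendsto t atTop (𝓝 0) ∧
      ∃ a : ℕ → Y × Z, (∀ n, a n ∈ S) ∧ Tendsto (fun n => t n • (a n).1) atTop (𝓝 u) ∧
        Tendsto (fun n => t n • (a n).2) atTop (𝓝 α) := by
  simp only [recessionCone, mem_ofPred_eq, Prod.tendsto_iff, Prod.smul_fst, Prod.smul_snd]

theorem tendsto_norm_atTop_of_tendsto_smul {ι : Type*} {l : Filter ι} {t : ι → ℝ} {a : ι → Y}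
    {u : Y} (ht : ∀ i, 0 < t i) (ht0 : Tendsto t l (𝓝 0)) (hu : u ≠ 0)
    (hlim : Tendsto (fun i => t i • a i) l (𝓝 u)) : Tendsto (fun i => ‖a i‖) l atTop := by
  have hinv : Tendsto (fun i => (t i)⁻¹) l atTop :=
    tendsto_inv_nhdsGT_zero.comp
      (tendsto_nhdsWithin_iff.2 ⟨ht0, Eventually.of_forall ht⟩)
  refine ((hlim.norm.pos_mul_atTop (norm_pos_iff.2 hu) hinv)).congr fun i => ?_
  rw [norm_smul, Real.norm_of_nonneg (ht i).le, mul_comm, ← mul_assoc,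
    inv_mul_cancel₀ (ht i).ne', one_mul]

theorem exists_norm_eq_one_mem_recessionCone [ProperSpace Y] {S : Set (Y × ℝ)} {M : ℝ}
    {x : ℕ → Y} (hx0 : ∀ n, x n ≠ 0) (hx : Tendsto (fun n => ‖x n‖) atTop atTop)
    (hS : ∀ n, (x n, M * ‖x n‖) ∈ S) : ∃ u, ‖u‖ = 1 ∧ (u, M) ∈ recessionCone S := by
  set t : ℕ → ℝ := fun n => ‖x n‖⁻¹
  have ht : ∀ n, 0 < t n := fun n => inv_pos.2 (norm_pos_iff.2 (hx0 n))
  have hsphere : ∀ n, t n • x n ∈ Metric.sphere (0 : Y) 1 := fun n => by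
    simp [t, norm_smul, hx0 n]
  obtain ⟨u, hu, φ, hφ, hlim⟩ := (isCompact_sphere (0 : Y) 1).tendsto_subseq hsphere
  refine ⟨u, by simpa using hu, mem_recessionCone_prod_iff.2 ⟨t ∘ φ, fun n => ht _,
    (tendsto_inv_atTop_zero.comp hx).comp hφ.tendsto_atTop,
    fun n => (x (φ n), M * ‖x (φ n)‖), fun n => hS _, hlim, ?_⟩⟩
  refine tendsto_const_nhds.congr fun n => ?_
  simp only [Function.comp_apply, smul_eq_mul, t]
  field_simp [norm_ne_zero_iff.2 (hx0 (φ n))]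

end RecessionCone

section Epigraph

variable {E : Type*} {f : E → EReal}

@[simp]
theorem mem_epiSet {p : E × ℝ} : p ∈ epiSet f ↔ f p.1 ≤ (p.2 : EReal) := Iff.rfl

variable [NormedAddCommGroup E]

theorem OneCoercive.exists_forall_coe_le [ProperSpace E] (hc : OneCoercive f)
    (hlsc : LowerSemicontinuous f) (hbot : ∀ x, f x ≠ ⊥) : ∃ m : ℝ, ∀ x, (m : EReal) ≤ f x := by
  obtain ⟨R, hR⟩ := hc 1
  obtain ⟨a, -, ha⟩ := (hlsc.lowerSemicontinuousOn _).exists_isMinOn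
    (Metric.nonempty_closedBall.2 (le_max_right R 0)) (isCompact_closedBall (0 : E) _)
  refine ⟨min (f a).toReal 0, fun x => ?_⟩
  rcases le_or_gt ‖x‖ (max R 0) with hx | hx
  · calc ((min (f a).toReal 0 : ℝ) : EReal) ≤ (f a).toReal := by exact_mod_cast min_le_left _ _
      _ ≤ f a := EReal.coe_toReal_le (hbot a)
      _ ≤ f x := ha (mem_closedBall_zero_iff.2 hx)
  · calc ((min (f a).toReal 0 : ℝ) : EReal) ≤ ((1 * ‖x‖ : ℝ) : EReal) := by
          exact_mod_cast (min_le_right _ _).trans (by positivity)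
      _ ≤ f x := hR x ((le_max_left _ _).trans hx.le)

theorem exists_seq_of_not_oneCoercive (hnc : ¬OneCoercive f) :
    ∃ M : ℝ, ∃ x : ℕ → E, (∀ n, x n ≠ 0) ∧ Tendsto (fun n => ‖x n‖) atTop atTop ∧
      ∀ n, (x n, M * ‖x n‖) ∈ epiSet f := by
  simp only [OneCoercive] at hnc
  push Not at hnc
  obtain ⟨M, hM⟩ := hnc
  choose x hxR hfx using fun n : ℕ => hM ((n : ℝ) + 1)
  refine ⟨M, x, fun n => norm_pos_iff.1 ((by positivity : (0 : ℝ) < n + 1).trans_le (hxR n)),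
    tendsto_atTop_mono hxR (tendsto_atTop_add_const_right _ _ tendsto_natCast_atTop_atTop),
    fun n => (hfx n).le⟩

variable [NormedSpace ℝ E]

theorem fst_eq_zero_of_mem_recessionCone_epiSet (hc : OneCoercive f) {u : E} {α : ℝ}
    (h : (u, α) ∈ recessionCone (epiSet f)) : u = 0 := by
  obtain ⟨t, ht, ht0, a, ha, hu, hα⟩ := mem_recessionCone_prod_iff.1 h
  by_contra hu0
  have hnorm := tendsto_norm_atTop_of_tendsto_smul ht ht0 hu0 hu
  have hbound : ∀ M : ℝ, M * ‖u‖ ≤ α := fun M => by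
    obtain ⟨R, hR⟩ := hc M
    have hle : ∀ᶠ n in atTop, t n * (M * ‖(a n).1‖) ≤ t n • (a n).2 := by
      filter_upwards [hnorm.eventually_ge_atTop R] with n hn
      exact mul_le_mul_of_nonneg_left (EReal.coe_le_coe_iff.1 ((hR _ hn).trans (ha n)))
        (ht n).le
    have hlim : Tendsto (fun n => t n * (M * ‖(a n).1‖)) atTop (𝓝 (M * ‖u‖)) := by
      refine (hu.norm.const_mul M).congr fun n => ?_
      rw [norm_smul, Real.norm_of_nonneg (ht n).le]
      ring
    exact le_of_tendsto_of_tendsto hlim hα hle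
  have hcontra := hbound ((α + 1) / ‖u‖)
  rw [div_mul_cancel₀ _ (norm_ne_zero_iff.2 hu0)] at hcontra
  linarith

theorem snd_nonneg_of_mem_recessionCone_epiSet {m : ℝ} (hm : ∀ x, (m : EReal) ≤ f x)
    {u : E} {α : ℝ} (h : (u, α) ∈ recessionCone (epiSet f)) : 0 ≤ α := by
  obtain ⟨t, ht, ht0, a, ha, -, hα⟩ := mem_recessionCone_prod_iff.1 h
  have hlim : Tendsto (fun n => t n * m) atTop (𝓝 0) := by simpa using ht0.mul_const m
  refine le_of_tendsto_of_tendsto hlim hα (Eventually.of_forall fun n => ?_)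
  exact mul_le_mul_of_nonneg_left (EReal.coe_le_coe_iff.1 ((hm _).trans (ha n))) (ht n).le

theorem zero_prod_Ici_subset_recessionCone_epiSet {x₀ : E} (hx₀ : f x₀ ≠ ⊤) :
    ({0} : Set E) ×ˢ Ici (0 : ℝ) ⊆ recessionCone (epiSet f) := by
  rintro ⟨u, α⟩ ⟨hu, hα⟩
  obtain rfl : u = 0 := hu
  refine mem_recessionCone_of_forall_add_smul_mem (s := (x₀, (f x₀).toReal)) fun c hc => ?_
  simp only [mem_epiSet, Prod.fst_add, Prod.snd_add, Prod.smul_mk, smul_zero, add_zero,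
    smul_eq_mul]
  calc f x₀ ≤ (f x₀).toReal := EReal.le_coe_toReal hx₀
    _ ≤ ((f x₀).toReal + c * α : ℝ) := by
      exact_mod_cast le_add_of_nonneg_right (mul_nonneg hc (mem_Ici.1 hα))

theorem recFn_zero_of_recessionCone_epiSet_eq
    (h : recessionCone (epiSet f) = ({0} : Set E) ×ˢ Ici (0 : ℝ)) : recFn f 0 = 0 := by
  have hleast : IsLeast ((fun α : ℝ => (α : EReal)) '' Ici 0) 0 :=
    ⟨⟨0, self_mem_Ici, rfl⟩, by rintro _ ⟨β, hβ, rfl⟩; exact EReal.coe_nonneg.2 hβ⟩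
  have hfiber : {α : ℝ | ((0 : E), α) ∈ ({0} : Set E) ×ˢ Ici (0 : ℝ)} = Ici 0 := by
    ext α
    simp
  rw [recFn, h, hfiber]
  exact hleast.isGLB.sInf_eq

theorem recFn_eq_top_of_recessionCone_epiSet_eq
    (h : recessionCone (epiSet f) = ({0} : Set E) ×ˢ Ici (0 : ℝ)) {u : E} (hu : u ≠ 0) :
    recFn f u = ⊤ := by
  simp [recFn, h, hu]

end Epigraph

theorem stmt7_general [FiniteDimensional ℝ X]
    (f : X → EReal) (hproper : (∃ x, f x ≠ ⊤) ∧ ∀ x, f x ≠ ⊥)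
    (hlsc : LowerSemicontinuous f) :
    OneCoercive f ↔
      ((recFn f 0 = 0 ∧ ∀ u : X, u ≠ 0 → recFn f u = ⊤) ∧
        recessionCone (epiSet f) = ({0} : Set X) ×ˢ Ici (0 : ℝ)) := by
  obtain ⟨⟨x₀, hx₀⟩, hbot⟩ := hproper
  constructor
  · intro hc
    obtain ⟨m, hm⟩ := hc.exists_forall_coe_le hlsc hbot
    have hcone : recessionCone (epiSet f) = ({0} : Set X) ×ˢ Ici (0 : ℝ) :=
      subset_antisymm
        (fun ⟨_, _⟩ h => ⟨fst_eq_zero_of_mem_recessionCone_epiSet hc h,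
          snd_nonneg_of_mem_recessionCone_epiSet hm h⟩)
        (zero_prod_Ici_subset_recessionCone_epiSet hx₀)
    exact ⟨⟨recFn_zero_of_recessionCone_epiSet_eq hcone,
      fun _ => recFn_eq_top_of_recessionCone_epiSet_eq hcone⟩, hcone⟩
  · rintro ⟨-, hcone⟩
    by_contra hnc
    obtain ⟨M, x, hx0, hx, hepi⟩ := exists_seq_of_not_oneCoercive hnc
    obtain ⟨u, hu, hmem⟩ := exists_norm_eq_one_mem_recessionCone hx0 hx hepi
    rw [hcone] at hmem
    have hu0 : u = 0 := hmem.1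
    simp [hu0] at hu

/-- A proper lsc function `f` on a nontrivial finite-dimensional real
normed space is 1-coercive iff its recession function is the indicator function of `{0}`,
equivalently the recession cone of its epigraph equals `{0} × ℝ₊`. -/
theorem stmt7 [FiniteDimensional ℝ X] [Nontrivial X]
    (f : X → EReal) (hproper : (∃ x, f x ≠ ⊤) ∧ ∀ x, f x ≠ ⊥)
    (hlsc : LowerSemicontinuous f) :
    OneCoercive f ↔
      ((recFn f 0 = 0 ∧ ∀ u : X, u ≠ 0 → recFn f u = ⊤) ∧
        recessionCone (epiSet f) = ({0} : Set X) ×ˢ Ici (0 : ℝ)) :=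
  stmt7_general f hproper hlsc
end

section
/- Let X be a finite-dimensional real normed space and f : X → ℝ ∪ {±∞} a proper lower semicontinuous function. Assume the recession function f_∞ is a proper convex (hence sublinear) function satisfying f_∞(u) + f_∞(−u) > 0 for all u ∈ X \ {0}, and that f(x + u) ≤ f(x) + f_∞(u) for all x, u ∈ X. Then conv(epi f) is closed. In particular, if f is 1-coercive (lim_{‖x‖→∞} f(x)/‖x‖ = +∞) then conv(epi f) is closed. -/
/-!
Write points of `conv (epi f)` as convex combinations of `d + 1` points of `epi f`
(Carathéodory) and take a sequence of them converging to a point `z`. If the weighted points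
`wᵢ pᵢ` stay bounded, a subsequence converges: terms whose weight has a positive limit converge
to points of the closed set `epi f`, and terms whose weight tends to zero converge to recession
directions, which are absorbed because `epi f + (epi f)_∞ ⊆ epi f`; so `z ∈ conv (epi f)`.
If they were unbounded, rescaling by their size would produce recession directions, not all
zero, summing to zero. This is impossible because `(epi f)_∞` lies in the convex cone
`epi f_∞`, which contains no line: `f_∞(u) + f_∞(-u) > 0` for `u ≠ 0`, and `f_∞(0) ≥ 0` by
`f(x) ≤ f(x) + f_∞(0)`. For a 1-coercive function the recession cone of the epigraph is the
vertical ray `{0} × [0, ∞)`.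
-/

open Set Filter Topology Pointwise

variable {X : Type*} [NormedAddCommGroup X] [NormedSpace ℝ X]

section RecessionCone

variable {E : Type*} [NormedAddCommGroup E] [NormedSpace ℝ E] {S : Set E}

lemma zero_mem_recessionCone (hS : S.Nonempty) : (0 : E) ∈ recessionCone S := by
  obtain ⟨s, hs⟩ := hS
  refine ⟨fun n => 1 / ((n : ℝ) + 1), fun n => by positivity,
    tendsto_one_div_add_atTop_nhds_zero_nat, fun _ => s, fun _ => hs, ?_⟩
  simpa using (tendsto_one_div_add_atTop_nhds_zero_nat (𝕜 := ℝ)).smul_const s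

lemma smul_mem_recessionCone {u : E} (hu : u ∈ recessionCone S) {c : ℝ} (hc : 0 < c) :
    c • u ∈ recessionCone S := by
  obtain ⟨t, ht, ht0, a, ha, hta⟩ := hu
  refine ⟨fun n => c * t n, fun n => mul_pos hc (ht n), by simpa using ht0.const_mul c,
    a, ha, ?_⟩
  simpa [smul_smul] using hta.const_smul c

lemma mem_recessionCone_of_tendsto (hS : S.Nonempty) {t : ℕ → ℝ} {a : ℕ → E} {u : E}
    (ht : ∀ n, 0 ≤ t n) (ht0 : Tendsto t atTop (𝓝 0)) (ha : ∀ n, a n ∈ S)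
    (hu : Tendsto (fun n => t n • a n) atTop (𝓝 u)) : u ∈ recessionCone S := by
  by_cases hfreq : ∃ᶠ n in atTop, t n = 0
  · obtain rfl : u = 0 := tendsto_nhds_unique_of_frequently_eq hu tendsto_const_nhds
      (hfreq.mono fun n hn => by simp [hn])
    exact zero_mem_recessionCone hS
  · obtain ⟨N, hN⟩ := eventually_atTop.1 (not_frequently.1 hfreq)
    exact ⟨fun n => t (n + N), fun n => (ht _).lt_of_ne' (hN _ (Nat.le_add_left N n)),
      (tendsto_add_atTop_iff_nat N).2 ht0, fun n => a (n + N), fun n => ha _,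
      (tendsto_add_atTop_iff_nat N).2 hu⟩

end RecessionCone

lemma ConvexCone.Salient.eq_zero_of_sum_eq_zero {R G ι : Type*} [Semiring R] [PartialOrder R]
    [IsOrderedRing R] [AddCommGroup G] [Module R G] {K : ConvexCone R G} (hK : K.Salient)
    (hK₀ : K.Pointed) {s : Finset ι} {v : ι → G} (hv : ∀ i ∈ s, v i ∈ K)
    (hsum : ∑ i ∈ s, v i = 0) {i : ι} (hi : i ∈ s) : v i = 0 := by
  classical
  by_contra hne
  refine hK _ (hv i hi) hne ?_
  rw [← Finset.add_sum_erase s v hi, add_eq_zero_iff_neg_eq] at hsum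
  rw [hsum]
  exact (K.toPointedCone hK₀).sum_mem fun j hj => hv j (Finset.mem_of_mem_erase hj)

lemma Function.Embedding.sum_extend_zero {ι κ M : Type*} [Fintype ι] [Fintype κ]
    [AddCommMonoid M] (e : ι ↪ κ) (g : ι → M) :
    ∑ k, Function.extend e g 0 k = ∑ i, g i := by
  classical
  rw [← Finset.sum_subset (f := Function.extend e g 0)
    (Finset.subset_univ (Finset.univ.map e))
    fun k _ hk => Function.extend_apply' _ _ _ (by simpa using hk), Finset.sum_map]
  simp [e.injective.extend_apply]

section ConvexHull

variable {E : Type*} [NormedAddCommGroup E] [NormedSpace ℝ E] {S : Set E}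

lemma exists_fin_convexCombination_of_mem_convexHull [FiniteDimensional ℝ E]
    (hS : S.Nonempty) {z : E} (hz : z ∈ convexHull ℝ S) :
    ∃ w ∈ stdSimplex ℝ (Fin (Module.finrank ℝ E + 1)),
      ∃ p : Fin (Module.finrank ℝ E + 1) → E, (∀ i, p i ∈ S) ∧ ∑ i, w i • p i = z := by
  classical
  obtain ⟨s, hs⟩ := hS
  obtain ⟨ι, _, q, w, hqS, hind, hw₀, hw₁, hwq⟩ := eq_pos_convex_span_of_mem_convexHull hz
  obtain ⟨e⟩ : Nonempty (ι ↪ Fin (Module.finrank ℝ E + 1)) :=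
    Function.Embedding.nonempty_of_card_le <| by
      simpa using hind.card_le_finrank_succ.trans (Nat.succ_le_succ (Submodule.finrank_le _))
  refine ⟨Function.extend e w 0, ⟨fun k => ?_, by rw [e.sum_extend_zero, hw₁]⟩,
    Function.extend e q fun _ => s, fun k => ?_, ?_⟩
  · rw [Function.extend_def]; split_ifs
    exacts [(hw₀ _).le, le_rfl]
  · rw [Function.extend_def]; split_ifs
    exacts [hqS ⟨_, rfl⟩, hs]
  · rw [← hwq, ← e.sum_extend_zero]
    refine Finset.sum_congr rfl fun k _ => ?_
    simp only [Function.extend_def]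
    split_ifs <;> simp

lemma add_mem_convexHull_of_mem_recessionCone
    (hadd : ∀ p ∈ S, ∀ v ∈ recessionCone S, p + v ∈ S) {z v : E}
    (hz : z ∈ convexHull ℝ S) (hv : v ∈ recessionCone S) : z + v ∈ convexHull ℝ S := by
  have : v +ᵥ convexHull ℝ S ⊆ convexHull ℝ S := by
    rw [← convexHull_vadd]
    refine convexHull_min ?_ (convex_convexHull ℝ S)
    rintro _ ⟨p, hp, rfl⟩
    exact subset_convexHull ℝ S (by simpa [add_comm] using hadd p hp v hv)
  simpa [add_comm] using this (vadd_mem_vadd_set hz)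

lemma sum_mem_convexHull_of_mem_recessionCone {ι : Type*} [Fintype ι]
    (hadd : ∀ p ∈ S, ∀ v ∈ recessionCone S, p + v ∈ S) {θ : ι → ℝ} {v : ι → E}
    (hθ : θ ∈ stdSimplex ℝ ι) (hpos : ∀ i, 0 < θ i → (θ i)⁻¹ • v i ∈ S)
    (hzero : ∀ i, θ i = 0 → v i ∈ recessionCone S) : ∑ i, v i ∈ convexHull ℝ S := by
  classical
  rw [← Finset.sum_filter_add_sum_filter_not Finset.univ (fun i => 0 < θ i)]
  have hmain : ∑ i ∈ Finset.univ.filter (fun i => 0 < θ i), v i ∈ convexHull ℝ S := by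
    rw [Finset.sum_congr rfl fun i hi =>
      (smul_inv_smul₀ (Finset.mem_filter.1 hi).2.ne' (v i)).symm]
    refine (convex_convexHull ℝ S).sum_mem (fun i _ => hθ.1 i) ?_
      fun i hi => subset_convexHull ℝ S (hpos i (Finset.mem_filter.1 hi).2)
    rw [Finset.sum_filter_of_ne fun i _ hi => (hθ.1 i).lt_of_ne' hi, hθ.2]
  refine Finset.sum_induction _ (fun x => ∀ z ∈ convexHull ℝ S, z + x ∈ convexHull ℝ S)
    (fun a b ha hb z hz => add_assoc z a b ▸ hb _ (ha z hz)) (fun z hz => by simpa using hz)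
    (fun i hi z hz => add_mem_convexHull_of_mem_recessionCone hadd hz (hzero i ?_)) _ hmain
  exact ((hθ.1 i).eq_or_lt.resolve_right (Finset.mem_filter.1 hi).2).symm

variable [FiniteDimensional ℝ E] {ι : Type*} [Fintype ι] {w : ℕ → ι → ℝ} {p : ℕ → ι → E}

lemma isBounded_range_smul_of_salient (hS : S.Nonempty) {K : ConvexCone ℝ E}
    (hK : K.Salient) (hSK : recessionCone S ⊆ K) (hw : ∀ k, w k ∈ stdSimplex ℝ ι)
    (hp : ∀ k i, p k i ∈ S) (hz : Bornology.IsBounded (range fun k => ∑ i, w k i • p k i)) :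
    Bornology.IsBounded (range fun k i => w k i • p k i) := by
  set b : ℕ → ι → E := fun k i => w k i • p k i
  by_contra hunb
  have hlarge : ∀ n : ℕ, ∃ k, (n : ℝ) + 1 ≤ ‖b k‖ := by
    intro n
    by_contra! h
    exact hunb (isBounded_iff_forall_norm_le.2 ⟨n + 1, forall_mem_range.2 fun k => (h k).le⟩)
  choose κ hκ using hlarge
  set t : ℕ → ℝ := fun n => ‖b (κ n)‖⁻¹
  have hbpos : ∀ n, 0 < ‖b (κ n)‖ := fun n => lt_of_lt_of_le (by positivity) (hκ n)
  have ht0 : Tendsto t atTop (𝓝 0) :=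
    squeeze_zero (fun n => (inv_pos.2 (hbpos n)).le)
      (fun n => by simpa [t, one_div] using inv_anti₀ (by positivity) (hκ n))
      (tendsto_one_div_add_atTop_nhds_zero_nat (𝕜 := ℝ))
  have hunit : ∀ n, ‖t n • b (κ n)‖ = 1 := fun n => by
    rw [norm_smul, norm_inv, norm_norm, inv_mul_cancel₀ (hbpos n).ne']
  obtain ⟨v, -, φ, hφ, hv⟩ :=
    tendsto_subseq_of_bounded (Metric.isBounded_closedBall (x := 0))
      fun n => mem_closedBall_zero_iff.2 (hunit n).le
  have hv₁ : ‖v‖ = 1 := tendsto_nhds_unique hv.norm (by simp [hunit])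
  have hvK : ∀ i, v i ∈ K := fun i => hSK <|
    mem_recessionCone_of_tendsto hS (t := fun n => t (φ n) * w (κ (φ n)) i)
      (fun n => mul_nonneg (inv_pos.2 (hbpos _)).le ((hw _).1 i))
      (squeeze_zero (fun n => mul_nonneg (inv_pos.2 (hbpos _)).le ((hw _).1 i))
        (fun n => mul_le_of_le_one_right (inv_pos.2 (hbpos _)).le
          (mem_Icc_of_mem_stdSimplex (hw _) i).2) (ht0.comp hφ.tendsto_atTop))
      (fun n => hp _ i) (by simpa [b, smul_smul] using tendsto_pi_nhds.1 hv i)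
  have hsum : ∑ i, v i = 0 := by
    refine tendsto_nhds_unique (tendsto_finsetSum _ fun i _ => tendsto_pi_nhds.1 hv i) ?_
    obtain ⟨C, hC⟩ := isBounded_iff_forall_norm_le.1 hz
    have := (ht0.comp hφ.tendsto_atTop).zero_smul_isBoundedUnder_le
      (g := fun n => ∑ i, b (κ (φ n)) i)
      (isBoundedUnder_of ⟨C, fun n => hC _ (mem_range_self _)⟩)
    simpa [Finset.smul_sum] using this
  exact one_ne_zero (hv₁ ▸ norm_eq_zero.2 (funext fun i =>
    hK.eq_zero_of_sum_eq_zero (hSK (zero_mem_recessionCone hS)) (fun i _ => hvK i) hsum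
      (Finset.mem_univ i)))

lemma mem_convexHull_of_tendsto (hS : IsClosed S) (hne : S.Nonempty)
    (hadd : ∀ p ∈ S, ∀ v ∈ recessionCone S, p + v ∈ S) (hw : ∀ k, w k ∈ stdSimplex ℝ ι)
    (hp : ∀ k i, p k i ∈ S) (hb : Bornology.IsBounded (range fun k i => w k i • p k i))
    {z : E} (hz : Tendsto (fun k => ∑ i, w k i • p k i) atTop (𝓝 z)) : z ∈ convexHull ℝ S := by
  obtain ⟨⟨θ, v⟩, -, φ, hφ, hlim⟩ :=
    tendsto_subseq_of_bounded ((bounded_stdSimplex ι).prod hb)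
      fun k => mk_mem_prod (hw k) (mem_range_self k)
  have hθ : ∀ i, Tendsto (fun n => w (φ n) i) atTop (𝓝 (θ i)) :=
    tendsto_pi_nhds.1 hlim.fst_nhds
  have hv : ∀ i, Tendsto (fun n => w (φ n) i • p (φ n) i) atTop (𝓝 (v i)) :=
    tendsto_pi_nhds.1 hlim.snd_nhds
  have hzv : ∑ i, v i = z :=
    tendsto_nhds_unique (tendsto_finsetSum _ fun i _ => hv i) (hz.comp hφ.tendsto_atTop)
  rw [← hzv]
  refine sum_mem_convexHull_of_mem_recessionCone hadd
    (isClosed_stdSimplex ℝ ι |>.mem_of_tendsto hlim.fst_nhds (Eventually.of_forall fun n => hw _))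
    (fun i hi => hS.mem_of_tendsto (((hθ i).inv₀ hi.ne').smul (hv i)) ?_)
    (fun i hi => mem_recessionCone_of_tendsto hne (fun n => (hw _).1 i) (hi ▸ hθ i)
      (fun n => hp _ i) (hv i))
  filter_upwards [(hθ i).eventually (eventually_gt_nhds hi)] with n hn
  rw [inv_smul_smul₀ hn.ne']
  exact hp _ i

end ConvexHull

theorem isClosed_convexHull_of_recessionCone_subset_salient {E : Type*} [NormedAddCommGroup E]
    [NormedSpace ℝ E] [FiniteDimensional ℝ E] {S : Set E} (hS : IsClosed S)
    (hadd : ∀ p ∈ S, ∀ v ∈ recessionCone S, p + v ∈ S) {K : ConvexCone ℝ E} (hK : K.Salient)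
    (hSK : recessionCone S ⊆ K) : IsClosed (convexHull ℝ S) := by
  rcases S.eq_empty_or_nonempty with rfl | hne
  · simp
  refine isClosed_of_closure_subset fun z hz => ?_
  obtain ⟨zs, hzs, hlim⟩ := mem_closure_iff_seq_limit.1 hz
  choose w hw p hp hwp using
    fun k => exists_fin_convexCombination_of_mem_convexHull hne (hzs k)
  replace hlim : Tendsto (fun k => ∑ i, w k i • p k i) atTop (𝓝 z) := by simpa only [hwp]
  have hb := isBounded_range_smul_of_salient hne hK hSK hw hp
    (Metric.isBounded_range_of_tendsto _ hlim)
  exact mem_convexHull_of_tendsto hS hne hadd hw hp hb hlim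

section RecessionFunction

variable {f : X → EReal}

omit [NormedSpace ℝ X] in
lemma isClosed_epiSet (hf : LowerSemicontinuous f) : IsClosed (epiSet f) :=
  (lowerSemicontinuous_iff_isClosed_epigraph.1 hf).preimage
    (continuous_fst.prodMk (continuous_coe_real_ereal.comp continuous_snd))

lemma recessionCone_epiSet_subset_epiSet_recFn :
    recessionCone (epiSet f) ⊆ epiSet (recFn f) :=
  fun p hp => (sInf_le ⟨p.2, hp, rfl⟩ : recFn f p.1 ≤ p.2)

lemma recFn_smul_le {u : X} {α c : ℝ} (h : recFn f u ≤ α) (hc : 0 < c) :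
    recFn f (c • u) ≤ ((c * α : ℝ) : EReal) := by
  refine EReal.le_of_forall_lt_iff_le.1 fun z hz => ?_
  have hαz : α < z / c := (lt_div_iff₀' hc).2 (EReal.coe_lt_coe_iff.1 hz)
  obtain ⟨_, ⟨β, hβ, rfl⟩, hβz⟩ := sInf_lt_iff.1 (h.trans_lt (EReal.coe_lt_coe_iff.2 hαz))
  have hcβ : (c • u, c * β) ∈ recessionCone (epiSet f) := by
    simpa using smul_mem_recessionCone hβ hc
  exact (recessionCone_epiSet_subset_epiSet_recFn hcβ).trans <| EReal.coe_le_coe_iff.2 <|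
    ((lt_div_iff₀' hc).1 (EReal.coe_lt_coe_iff.1 hβz)).le

def recFnCone (f : X → EReal) (hconv : Convex ℝ (epiSet (recFn f))) :
    ConvexCone ℝ (X × ℝ) where
  carrier := epiSet (recFn f)
  smul_mem' _ hc _ hp := recFn_smul_le hp hc
  add_mem' p hp q hq := by
    have hmid := recFn_smul_le (hconv hp hq (by norm_num : (0 : ℝ) ≤ 1 / 2)
      (by norm_num : (0 : ℝ) ≤ 1 / 2) (by norm_num)) two_pos
    have h2 : (2 : ℝ) • ((1 / 2 : ℝ) • p + (1 / 2 : ℝ) • q) = p + q := by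
      rw [smul_add, smul_smul, smul_smul]; norm_num
    rwa [← Prod.smul_fst, ← smul_eq_mul, ← Prod.smul_snd, h2] at hmid

lemma recFn_zero_nonneg (hsub : ∀ x u : X, f (x + u) ≤ f x + recFn f u) {x : X}
    (hx : f x ≠ ⊤) (hx' : f x ≠ ⊥) : 0 ≤ recFn f 0 := by
  by_contra! hneg
  have h := hsub x 0
  rw [add_zero, ← EReal.coe_toReal hx hx'] at h
  simpa using h.trans_lt (EReal.add_lt_add_left_coe hneg _)

lemma recFnCone_salient (hconv : Convex ℝ (epiSet (recFn f)))
    (hsub : ∀ x u : X, f (x + u) ≤ f x + recFn f u) {x : X} (hx : f x ≠ ⊤) (hx' : f x ≠ ⊥)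
    (hpos : ∀ u : X, u ≠ 0 → 0 < recFn f u + recFn f (-u)) : (recFnCone f hconv).Salient := by
  rintro ⟨u, α⟩ (hp : recFn f u ≤ α) hne (hn : recFn f (-u) ≤ ((-α : ℝ) : EReal))
  by_cases hu : u = 0
  · subst hu
    have h0 := recFn_zero_nonneg hsub hx hx'
    rw [neg_zero] at hn
    have h1 : (0 : ℝ) ≤ α := by exact_mod_cast h0.trans hp
    have h2 : (0 : ℝ) ≤ -α := by exact_mod_cast h0.trans hn
    exact hne (by simp [le_antisymm (neg_nonneg.1 h2) h1])
  · refine lt_irrefl (0 : EReal) ((hpos u hu).trans_le ((add_le_add hp hn).trans_eq ?_))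
    rw [← EReal.coe_add, add_neg_cancel, EReal.coe_zero]

lemma add_mem_epiSet_of_mem_recessionCone (hsub : ∀ x u : X, f (x + u) ≤ f x + recFn f u)
    {p v : X × ℝ} (hp : p ∈ epiSet f) (hv : v ∈ recessionCone (epiSet f)) :
    p + v ∈ epiSet f :=
  (hsub p.1 v.1).trans <| (add_le_add hp (recessionCone_epiSet_subset_epiSet_recFn hv)).trans_eq
    (EReal.coe_add _ _).symm

theorem isClosed_convexHull_epiSet_of_recFn [FiniteDimensional ℝ X]
    (hlsc : LowerSemicontinuous f) {x : X} (hx : f x ≠ ⊤) (hx' : f x ≠ ⊥)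
    (hconv : Convex ℝ (epiSet (recFn f))) (hpos : ∀ u : X, u ≠ 0 → 0 < recFn f u + recFn f (-u))
    (hsub : ∀ x u : X, f (x + u) ≤ f x + recFn f u) : IsClosed (convexHull ℝ (epiSet f)) :=
  isClosed_convexHull_of_recessionCone_subset_salient (isClosed_epiSet hlsc)
    (fun _ hp _ hv => add_mem_epiSet_of_mem_recessionCone hsub hp hv)
    (recFnCone_salient hconv hsub hx hx' hpos) recessionCone_epiSet_subset_epiSet_recFn

end RecessionFunction

lemma LowerSemicontinuous.exists_coe_le_of_isCompact {α : Type*} [TopologicalSpace α]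
    {g : α → EReal} (hg : LowerSemicontinuous g) (hbot : ∀ x, g x ≠ ⊥) {K : Set α}
    (hK : IsCompact K) : ∃ c : ℝ, ∀ x ∈ K, (c : EReal) ≤ g x := by
  rcases K.eq_empty_or_nonempty with rfl | hne
  · exact ⟨0, by simp⟩
  obtain ⟨a, -, ha⟩ := LowerSemicontinuousOn.exists_isMinOn hne hK (hg.lowerSemicontinuousOn K)
  exact ⟨(g a).toReal, fun x hx => (EReal.coe_toReal_le (hbot a)).trans (ha hx)⟩

def verticalRay (E : Type*) [AddCommGroup E] [Module ℝ E] : ConvexCone ℝ (E × ℝ) where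
  carrier := {p | p.1 = 0 ∧ 0 ≤ p.2}
  smul_mem' c hc p hp := ⟨by simp [hp.1], mul_nonneg hc.le hp.2⟩
  add_mem' p hp q hq := ⟨by simp [hp.1, hq.1], add_nonneg hp.2 hq.2⟩

lemma verticalRay_salient (E : Type*) [AddCommGroup E] [Module ℝ E] :
    (verticalRay E).Salient := by
  rintro ⟨u, α⟩ ⟨rfl, hα⟩ hne ⟨-, hα' : 0 ≤ -α⟩
  exact hne (by simp [le_antisymm (neg_nonneg.1 hα') hα])

namespace OneCoercive

variable {g : X → EReal}

omit [NormedSpace ℝ X] in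
lemma exists_coe_sub_le [ProperSpace X] (hco : OneCoercive g) (hg : LowerSemicontinuous g)
    (hbot : ∀ x, g x ≠ ⊥) (M : ℝ) : ∃ B : ℝ, ∀ x, ((M * ‖x‖ - B : ℝ) : EReal) ≤ g x := by
  obtain ⟨R, hR⟩ := hco M
  obtain ⟨c, hc⟩ := hg.exists_coe_le_of_isCompact hbot (isCompact_closedBall (0 : X) R)
  refine ⟨|M| * |R| + |c|, fun x => ?_⟩
  rcases le_total ‖x‖ R with hxR | hxR
  · refine le_trans (EReal.coe_le_coe_iff.2 ?_) (hc x (mem_closedBall_zero_iff.2 hxR))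
    have : M * ‖x‖ ≤ |M| * |R| := (le_abs_self _).trans <| by
      rw [abs_mul, abs_norm]
      exact mul_le_mul_of_nonneg_left (hxR.trans (le_abs_self R)) (abs_nonneg M)
    linarith [neg_abs_le c]
  · exact (EReal.coe_le_coe_iff.2 (sub_le_self _ (by positivity))).trans (hR x hxR)

lemma recessionCone_epiSet_subset [ProperSpace X] (hco : OneCoercive g)
    (hg : LowerSemicontinuous g) (hbot : ∀ x, g x ≠ ⊥) :
    recessionCone (epiSet g) ⊆ verticalRay X := by
  rintro ⟨u, α⟩ ⟨t, ht, ht0, a, ha, hta⟩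
  have hnorm : Tendsto (fun n => t n * ‖(a n).1‖) atTop (𝓝 ‖u‖) := by
    simpa [norm_smul, abs_of_pos (ht _)] using hta.fst_nhds.norm
  have key : ∀ M : ℝ, M * ‖u‖ ≤ α := by
    intro M
    obtain ⟨B, hB⟩ := hco.exists_coe_sub_le hg hbot M
    refine le_of_tendsto_of_tendsto' (by simpa using (hnorm.const_mul M).sub (ht0.mul_const B))
      hta.snd_nhds fun n => ?_
    have : M * ‖(a n).1‖ - B ≤ (a n).2 := EReal.coe_le_coe_iff.1 ((hB _).trans (ha n))
    show M * (t n * ‖(a n).1‖) - t n * B ≤ t n * (a n).2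
    nlinarith [mul_le_mul_of_nonneg_left this (ht n).le]
  refine ⟨?_, by simpa using key 0⟩
  by_contra hu
  have := key ((α + 1) / ‖u‖)
  rw [div_mul_cancel₀ _ (norm_ne_zero_iff.2 hu)] at this
  linarith

theorem isClosed_convexHull_epiSet [FiniteDimensional ℝ X] (hco : OneCoercive g)
    (hg : LowerSemicontinuous g) (hbot : ∀ x, g x ≠ ⊥) : IsClosed (convexHull ℝ (epiSet g)) := by
  refine isClosed_convexHull_of_recessionCone_subset_salient (isClosed_epiSet hg)
    (fun p hp v hv => ?_) (verticalRay_salient X) (hco.recessionCone_epiSet_subset hg hbot)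
  obtain ⟨hv₁, hv₂⟩ := hco.recessionCone_epiSet_subset hg hbot hv
  show g (p.1 + v.1) ≤ ((p.2 + v.2 : ℝ) : EReal)
  rw [hv₁, add_zero]
  exact hp.trans (EReal.coe_le_coe_iff.2 (le_add_of_nonneg_right hv₂))

end OneCoercive

theorem stmt8_general [FiniteDimensional ℝ X]
    (f : X → EReal) (hproper : (∃ x, f x ≠ ⊤) ∧ ∀ x, f x ≠ ⊥)
    (hlsc : LowerSemicontinuous f)
    (hrecConvex : Convex ℝ (epiSet (recFn f)))
    (hpos : ∀ u : X, u ≠ 0 → 0 < recFn f u + recFn f (-u))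
    (hsub : ∀ x u : X, f (x + u) ≤ f x + recFn f u) :
    IsClosed (convexHull ℝ (epiSet f)) ∧
    ∀ g : X → EReal, (∃ x, g x ≠ ⊤) → (∀ x, g x ≠ ⊥) → LowerSemicontinuous g →
      OneCoercive g → IsClosed (convexHull ℝ (epiSet g)) := by
  obtain ⟨⟨x, hx⟩, hbot⟩ := hproper
  exact ⟨isClosed_convexHull_epiSet_of_recFn hlsc hx (hbot x) hrecConvex hpos hsub,
    fun g _ hgbot hg hco => hco.isClosed_convexHull_epiSet hg hgbot⟩

/-- Let `f` be a proper lsc function on a nontrivial finite-dimensional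
real normed space. If the recession function `f_∞` is proper and convex, satisfies
`f_∞(u) + f_∞(-u) > 0` for all `u ≠ 0`, and `f(x+u) ≤ f(x) + f_∞(u)` for all `x, u`,
then `conv (epi f)` is closed. In particular, `conv (epi g)` is closed for every proper
lsc 1-coercive function `g`. (Convexity of `f_∞` is expressed via its epigraph.) -/
theorem stmt8 [FiniteDimensional ℝ X] [Nontrivial X]
    (f : X → EReal) (hproper : (∃ x, f x ≠ ⊤) ∧ ∀ x, f x ≠ ⊥)
    (hlsc : LowerSemicontinuous f)
    (hrecProper : (∃ u, recFn f u ≠ ⊤) ∧ ∀ u, recFn f u ≠ ⊥)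
    (hrecConvex : Convex ℝ (epiSet (recFn f)))
    (hpos : ∀ u : X, u ≠ 0 → 0 < recFn f u + recFn f (-u))
    (hsub : ∀ x u : X, f (x + u) ≤ f x + recFn f u) :
    IsClosed (convexHull ℝ (epiSet f)) ∧
    ∀ g : X → EReal, (∃ x, g x ≠ ⊤) → (∀ x, g x ≠ ⊥) → LowerSemicontinuous g →
      OneCoercive g → IsClosed (convexHull ℝ (epiSet g)) :=
  stmt8_general f hproper hlsc hrecConvex hpos hsub
end
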